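/- arXiv:1708.00728 — 6 statements merged into one kernel-verified Lean document; each statement's English description precedes it below -/
import Mathlib

section
/- Let G be a connected undirected graph with n nodes and incidence matrix B ∈ ℝ^{n×m}, let E = [I_p ; 0_{(n−p)×p}] ∈ ℝ^{n×p} with p ≥ 1, let Q ∈ ℝ^{p×p} be diagonal with strictly positive diagonal entries, r ∈ ℝ^p, s ∈ ℝ and d ∈ ℝ^n. Consider minimizing C(u) = ½ uᵀQu + rᵀu + s over all u ∈ ℝ^p for which there exists λ ∈ ℝ^m with 0 = −Bλ + Eu − d. Then the unique minimizer is ū = Q⁻¹(λ*·1_p − r), where λ* = (1_nᵀ d + 1_pᵀ Q⁻¹ r)/(1_pᵀ Q⁻¹ 1_p): that is, ū is feasible and C(ū) < C(u) for every other feasible u ≠ ū. -/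
open Matrix BigOperators Filter Topology MeasureTheory

/-- An undirected graph on `Fin n` with `m` edges, each edge given an arbitrary
orientation: edge `k` goes from its positive end `pos k` to its negative end `neg k`. -/
structure OrientedGraph (n m : ℕ) where
  pos : Fin m → Fin n
  neg : Fin m → Fin n
  ne_ends : ∀ k, pos k ≠ neg k

namespace OrientedGraph

variable {n m : ℕ}

/-- The oriented incidence matrix `B ∈ ℝ^{n×m}`. -/
def inc (G : OrientedGraph n m) : Matrix (Fin n) (Fin m) ℝ :=
  Matrix.of fun i k => if i = G.pos k then (1 : ℝ) else if i = G.neg k then -1 else 0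

/-- Adjacency in the underlying undirected graph. -/
def Adj (G : OrientedGraph n m) (i j : Fin n) : Prop :=
  ∃ k, (G.pos k = i ∧ G.neg k = j) ∨ (G.pos k = j ∧ G.neg k = i)

/-- Connectedness of the underlying undirected graph. -/
def Connected (G : OrientedGraph n m) : Prop :=
  ∀ i j : Fin n, Relation.ReflTransGen G.Adj i j

end OrientedGraph

/-- The matrix `E = [I_p ; 0_{(n-p)×p}]` selecting the first `p` nodes. -/
def selE (n p : ℕ) : Matrix (Fin n) (Fin p) ℝ :=
  Matrix.of fun i j => if (i : ℕ) = (j : ℕ) then 1 else 0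

/-- Componentwise application of a family of scalar functions. -/
def cw {k : ℕ} (f : Fin k → ℝ → ℝ) (x : Fin k → ℝ) : Fin k → ℝ :=
  fun i => f i (x i)

/-- `λ* = (1ₙᵀ d + 1ₚᵀ Q⁻¹ r)/(1ₚᵀ Q⁻¹ 1ₚ)` for `Q = diag q`. -/
noncomputable def lamStar {n p : ℕ} (q r : Fin p → ℝ) (d : Fin n → ℝ) : ℝ :=
  ((∑ i, d i) + ∑ i, r i / q i) / (∑ i, (q i)⁻¹)

/-- The optimal input `ū = Q⁻¹(λ*·1ₚ − r)`. -/
noncomputable def uOpt {n p : ℕ} (q r : Fin p → ℝ) (d : Fin n → ℝ) : Fin p → ℝ :=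
  fun i => (lamStar q r d - r i) / q i

/-- The cost `C(u) = ½ uᵀQu + rᵀu + s` for `Q = diag q`. -/
noncomputable def cost {p : ℕ} (q r : Fin p → ℝ) (s : ℝ) (u : Fin p → ℝ) : ℝ :=
  (1 / 2) * (∑ i, q i * u i ^ 2) + (∑ i, r i * u i) + s

/-- `L` is the Laplacian matrix of a balanced, strongly connected weighted digraph:
nonpositive off-diagonal entries, zero row sums, zero column sums, and the digraph
whose arcs are the pairs with `L i j < 0` is strongly connected. -/
structure IsBalancedStronglyConnectedLaplacian {p : ℕ} (L : Matrix (Fin p) (Fin p) ℝ) : Prop where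
  offdiag_nonpos : ∀ i j, i ≠ j → L i j ≤ 0
  rowsum : L.mulVec (fun _ => 1) = 0
  colsum : Matrix.vecMul (fun _ => 1) L = 0
  sconn : ∀ i j : Fin p, Relation.ReflTransGen (fun a b => a ≠ b ∧ L a b < 0) i j

/-! The columns of `B` sum to zero and, `G` being connected, the differences `eᵢ - eⱼ` span the
zero-sum vectors, so `range B = 1ₙ^⊥`. Since `E` preserves coordinate sums, `u` is feasible iff
`1ₚᵀu = 1ₙᵀd`. On that hyperplane `ū` satisfies the Lagrange condition `Qū + r = λ*·1ₚ`, so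
`C(u) - C(ū) = ½ (u - ū)ᵀQ(u - ū)`, which is positive for `u ≠ ū`. -/

theorem Matrix.sum_mulVec_of_sum_col_eq {ι κ R : Type*} [Fintype ι] [Fintype κ] [CommSemiring R]
    {A : Matrix ι κ R} {c : R} (hA : ∀ k, ∑ i, A i k = c) (v : κ → R) :
    ∑ i, (A *ᵥ v) i = c * ∑ k, v k := by
  simp only [mulVec, dotProduct, Finset.mul_sum]
  rw [Finset.sum_comm]
  exact Finset.sum_congr rfl fun k _ => by rw [← Finset.sum_mul, hA, mul_comm]

namespace OrientedGraph

variable {n m : ℕ} (G : OrientedGraph n m)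

theorem inc_col (k : Fin m) :
    G.inc.col k = Pi.single (G.pos k) 1 - Pi.single (G.neg k) 1 := by
  ext i
  have hne := G.ne_ends k
  by_cases hp : i = G.pos k
  · subst hp; simp [inc, hne]
  · by_cases hn : i = G.neg k
    · subst hn; simp [inc, hne.symm]
    · simp [inc, hp, hn]

theorem sum_inc_apply (k : Fin m) : ∑ i, G.inc i k = 0 := by
  simp_rw [← Matrix.col_apply G.inc k, inc_col]
  simp

theorem sum_inc_mulVec (lam : Fin m → ℝ) : ∑ i, (G.inc *ᵥ lam) i = 0 := by
  rw [Matrix.sum_mulVec_of_sum_col_eq G.sum_inc_apply, zero_mul]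

theorem single_sub_single_mem_range_of_adj {i j : Fin n} (h : G.Adj i j) :
    Pi.single i 1 - Pi.single j 1 ∈ LinearMap.range G.inc.mulVecLin := by
  obtain ⟨k, ⟨rfl, rfl⟩ | ⟨rfl, rfl⟩⟩ := h
  · exact ⟨Pi.single k 1, by simp [inc_col]⟩
  · exact ⟨Pi.single k (-1), by simp [mulVec_single, inc_col]⟩

theorem single_sub_single_mem_range (hG : G.Connected) (i j : Fin n) :
    Pi.single i 1 - Pi.single j 1 ∈ LinearMap.range G.inc.mulVecLin := by
  induction hG i j with
  | refl => simp
  | tail _ hbc ih =>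
    simpa using Submodule.add_mem _ ih (G.single_sub_single_mem_range_of_adj hbc)

theorem exists_inc_mulVec_eq (hG : G.Connected) {x : Fin n → ℝ} (hx : ∑ i, x i = 0) :
    ∃ lam, G.inc *ᵥ lam = x := by
  rcases isEmpty_or_nonempty (Fin n) with _ | ⟨⟨i₀⟩⟩
  · exact ⟨0, Subsingleton.elim _ _⟩
  have hx' : x = ∑ j, x j • (Pi.single j 1 - Pi.single i₀ 1 : Fin n → ℝ) := by
    simp only [smul_sub, Finset.sum_sub_distrib, ← Finset.sum_smul, hx, zero_smul, sub_zero]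
    exact pi_eq_sum_univ' x
  rw [hx']
  exact Submodule.sum_mem _ fun j _ =>
    Submodule.smul_mem _ _ (G.single_sub_single_mem_range hG j i₀)

end OrientedGraph

theorem sum_selE_apply {n p : ℕ} (hpn : p ≤ n) (j : Fin p) : ∑ i, selE n p i j = 1 := by
  have h : ∀ i, selE n p i j = if i = Fin.castLE hpn j then 1 else 0 := fun i => by
    simp [selE, Fin.ext_iff]
  simp [h]

theorem exists_feasible_iff_sum_eq {n m p : ℕ} (hpn : p ≤ n) (G : OrientedGraph n m)
    (hG : G.Connected) (u : Fin p → ℝ) (d : Fin n → ℝ) :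
    (∃ lam, 0 = -(G.inc *ᵥ lam) + selE n p *ᵥ u - d) ↔ ∑ j, u j = ∑ i, d i := by
  have hE := Matrix.sum_mulVec_of_sum_col_eq (sum_selE_apply hpn) u
  rw [one_mul] at hE
  constructor
  · rintro ⟨lam, h⟩
    have := congrArg (fun x : Fin n → ℝ => ∑ i, x i) h
    simp only [Pi.zero_apply, Finset.sum_const_zero, Pi.sub_apply, Pi.add_apply, Pi.neg_apply,
      Finset.sum_sub_distrib, Finset.sum_add_distrib, Finset.sum_neg_distrib,
      G.sum_inc_mulVec, hE] at this
    linarith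
  · intro h
    obtain ⟨lam, hlam⟩ := G.exists_inc_mulVec_eq hG (x := selE n p *ᵥ u - d)
      (by simp [Finset.sum_sub_distrib, hE, h])
    exact ⟨lam, by rw [hlam]; abel⟩

section Cost

variable {p : ℕ} {q r : Fin p → ℝ}

theorem cost_eq_add_of_stationary (s c : ℝ) {u v : Fin p → ℝ} (hv : ∀ i, q i * v i + r i = c)
    (huv : ∑ i, u i = ∑ i, v i) :
    cost q r s u = cost q r s v + (1 / 2) * ∑ i, q i * (u i - v i) ^ 2 := by
  have hterm : ∀ i, q i * u i ^ 2 + 2 * (r i * u i) =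
      q i * v i ^ 2 + 2 * (r i * v i) + q i * (u i - v i) ^ 2 + 2 * c * (u i - v i) :=
    fun i => by rw [← hv i]; ring
  have hsum := Finset.sum_congr rfl fun i (_ : i ∈ Finset.univ) => hterm i
  simp only [Finset.sum_add_distrib, ← Finset.mul_sum, Finset.sum_sub_distrib, huv, sub_self,
    mul_zero, add_zero] at hsum
  unfold cost
  linarith

theorem cost_lt_cost_of_stationary (hq : ∀ i, 0 < q i) (s c : ℝ) {u v : Fin p → ℝ}
    (hv : ∀ i, q i * v i + r i = c) (huv : ∑ i, u i = ∑ i, v i) (hne : u ≠ v) :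
    cost q r s v < cost q r s u := by
  obtain ⟨i, hi⟩ := Function.ne_iff.1 hne
  have hpos : 0 < ∑ i, q i * (u i - v i) ^ 2 :=
    Finset.sum_pos' (fun j _ => mul_nonneg (hq j).le (sq_nonneg _))
      ⟨i, Finset.mem_univ _, mul_pos (hq i) (sq_pos_of_ne_zero (sub_ne_zero.2 hi))⟩
  rw [cost_eq_add_of_stationary s c hv huv]
  linarith

theorem mul_uOpt_add {n : ℕ} (hq : ∀ i, q i ≠ 0) (d : Fin n → ℝ) (i : Fin p) :
    q i * uOpt q r d i + r i = lamStar q r d := by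
  rw [uOpt, mul_div_cancel₀ _ (hq i)]
  ring

theorem sum_uOpt {n : ℕ} (hq : ∑ i, (q i)⁻¹ ≠ 0) (d : Fin n → ℝ) :
    ∑ i, uOpt q r d i = ∑ i, d i := by
  have h : ∀ i, uOpt q r d i = lamStar q r d * (q i)⁻¹ - r i / q i := fun i => by
    rw [uOpt, sub_div, div_eq_mul_inv]
  rw [Finset.sum_congr rfl fun i _ => h i, Finset.sum_sub_distrib, ← Finset.mul_sum, lamStar,
    div_mul_cancel₀ _ hq, add_sub_cancel_right]

end Cost

/-- The unique minimizer of `C(u) = ½uᵀQu + rᵀu + s` over all `u` that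
are feasible (i.e. `0 = −Bλ + Eu − d` for some `λ`) is `ū = Q⁻¹(λ*·1ₚ − r)` with
`λ* = (1ₙᵀd + 1ₚᵀQ⁻¹r)/(1ₚᵀQ⁻¹1ₚ)`: `ū` is feasible and `C(ū) < C(u)` for every other
feasible `u ≠ ū`. -/
theorem uOpt_is_unique_minimizer {n m p : ℕ} (hp : 0 < p) (hpn : p ≤ n)
    (G : OrientedGraph n m) (hG : G.Connected)
    (q r : Fin p → ℝ) (hq : ∀ i, 0 < q i) (s : ℝ) (d : Fin n → ℝ) :
    (∃ lam : Fin m → ℝ,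
      0 = -(G.inc.mulVec lam) + (selE n p).mulVec (uOpt q r d) - d) ∧
    ∀ u : Fin p → ℝ,
      (∃ lam : Fin m → ℝ, 0 = -(G.inc.mulVec lam) + (selE n p).mulVec u - d) →
      u ≠ uOpt q r d → cost q r s (uOpt q r d) < cost q r s u := by
  have hS : ∑ i, (q i)⁻¹ ≠ 0 :=
    (Finset.sum_pos (fun i _ => inv_pos.2 (hq i)) ⟨⟨0, hp⟩, Finset.mem_univ _⟩).ne'
  have hsum := sum_uOpt (r := r) hS d
  refine ⟨(exists_feasible_iff_sum_eq hpn G hG _ d).2 hsum, fun u hu hne => ?_⟩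
  rw [exists_feasible_iff_sum_eq hpn G hG] at hu
  exact cost_lt_cost_of_stationary hq s _ (mul_uOpt_add (fun i => (hq i).ne') d)
    (hu.trans hsum.symm) hne
end

section
/- Let L ∈ ℝ^{p×p} be the Laplacian matrix of a weighted directed graph that is balanced and strongly connected; i.e., L has nonpositive off-diagonal entries, L·1_p = 0 and 1_pᵀ·L = 0 (balanced), and the directed graph whose arcs are the pairs (i,j), i ≠ j, with L_{ij} < 0 is strongly connected. Then for all φ ∈ ℝ^p one has φᵀLφ ≥ 0, and φᵀLφ = 0 if and only if φ ∈ span(1_p). -/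
open Matrix BigOperators Filter Topology MeasureTheory

/-!
Zero row sums and zero column sums let one add `-(φ i ^ 2 + φ j ^ 2) L i j / 2` to every
term of `φᵀLφ = ∑ φ i L i j φ j` for free, which turns the quadratic form into
`½ ∑ -L i j (φ i - φ j)²`. Off the diagonal `-L i j ≥ 0`, so the form is nonnegative and
vanishes exactly when `φ` is constant along every arc; strong connectivity makes `φ` constant.
-/

namespace Matrix

variable {ι R : Type*}

theorem two_mul_dotProduct_mulVec_self_eq_sum [Fintype ι] [CommRing R] {L : Matrix ι ι R}
    (hrow : L *ᵥ 1 = 0) (hcol : 1 ᵥ* L = 0) (φ : ι → R) :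
    2 * (φ ⬝ᵥ L *ᵥ φ) = ∑ i, ∑ j, -L i j * (φ i - φ j) ^ 2 := by
  have hrow' : ∀ i, ∑ j, L i j = 0 := fun i => by
    simpa [mulVec, dotProduct] using congrFun hrow i
  have hcol' : ∀ j, ∑ i, L i j = 0 := fun j => by
    simpa [vecMul, dotProduct] using congrFun hcol j
  have hdiag_left : ∑ i, ∑ j, φ i ^ 2 * L i j = 0 := by
    simp [← Finset.mul_sum, hrow']
  have hdiag_right : ∑ i, ∑ j, φ j ^ 2 * L i j = 0 := by
    rw [Finset.sum_comm]
    simp [← Finset.mul_sum, hcol']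
  calc 2 * (φ ⬝ᵥ L *ᵥ φ)
      = ∑ i, ∑ j, 2 * (φ i * L i j * φ j) - ∑ i, ∑ j, φ i ^ 2 * L i j
          - ∑ i, ∑ j, φ j ^ 2 * L i j := by
        simp only [hdiag_left, hdiag_right, dotProduct, mulVec, Finset.mul_sum, mul_assoc,
          sub_zero]
    _ = ∑ i, ∑ j, -L i j * (φ i - φ j) ^ 2 := by
        simp only [← Finset.sum_sub_distrib]
        congr! 2 with i _ j _
        ring

section LinearOrderedField

variable [Field R] [LinearOrder R] [IsStrictOrderedRing R] {L : Matrix ι ι R}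

theorem neg_mul_sq_sub_nonneg (hoff : ∀ i j, i ≠ j → L i j ≤ 0) (φ : ι → R) (i j : ι) :
    0 ≤ -L i j * (φ i - φ j) ^ 2 := by
  rcases eq_or_ne i j with rfl | hij
  · simp
  · exact mul_nonneg (neg_nonneg.mpr (hoff i j hij)) (sq_nonneg _)

theorem dotProduct_mulVec_self_nonneg [Fintype ι] (hoff : ∀ i j, i ≠ j → L i j ≤ 0)
    (hrow : L *ᵥ 1 = 0) (hcol : 1 ᵥ* L = 0) (φ : ι → R) :
    0 ≤ φ ⬝ᵥ L *ᵥ φ := by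
  have h := two_mul_dotProduct_mulVec_self_eq_sum hrow hcol φ
  have : 0 ≤ ∑ i, ∑ j, -L i j * (φ i - φ j) ^ 2 :=
    Finset.sum_nonneg fun i _ => Finset.sum_nonneg fun j _ => neg_mul_sq_sub_nonneg hoff φ i j
  linarith

theorem dotProduct_mulVec_self_eq_zero_iff [Fintype ι] (hoff : ∀ i j, i ≠ j → L i j ≤ 0)
    (hrow : L *ᵥ 1 = 0) (hcol : 1 ᵥ* L = 0) (φ : ι → R) :
    φ ⬝ᵥ L *ᵥ φ = 0 ↔ ∀ i j, L i j < 0 → φ i = φ j := by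
  have hterm := neg_mul_sq_sub_nonneg hoff φ
  have hsum : φ ⬝ᵥ L *ᵥ φ = 0 ↔ ∀ i j, -L i j * (φ i - φ j) ^ 2 = 0 := by
    rw [← mul_eq_zero_iff_left (two_ne_zero' R), two_mul_dotProduct_mulVec_self_eq_sum hrow hcol,
      Finset.sum_eq_zero_iff_of_nonneg fun i _ => Finset.sum_nonneg fun j _ => hterm i j]
    simp only [Finset.mem_univ, forall_const,
      Finset.sum_eq_zero_iff_of_nonneg fun j _ => hterm _ j]
  rw [hsum]
  refine forall₂_congr fun i j => ⟨fun h hlt => ?_, fun h => ?_⟩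
  · simpa [hlt.ne, sub_eq_zero] using h
  · rcases eq_or_ne i j with rfl | hij
    · simp
    rcases (hoff i j hij).lt_or_eq with hlt | heq
    · simp [h hlt]
    · simp [heq]

end LinearOrderedField

end Matrix

/-- For the Laplacian `L` of a balanced, strongly connected weighted
digraph, `φᵀLφ ≥ 0` for all `φ`, with equality iff `φ ∈ span(1ₚ)`. -/
theorem balanced_laplacian_quadratic_form {p : ℕ} (L : Matrix (Fin p) (Fin p) ℝ)
    (hL : IsBalancedStronglyConnectedLaplacian L) :
    ∀ φ : Fin p → ℝ,
      0 ≤ φ ⬝ᵥ L.mulVec φ ∧ (φ ⬝ᵥ L.mulVec φ = 0 ↔ ∃ c : ℝ, φ = fun _ => c) := by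
  intro φ
  refine ⟨dotProduct_mulVec_self_nonneg hL.offdiag_nonpos hL.rowsum hL.colsum φ, ?_⟩
  rw [dotProduct_mulVec_self_eq_zero_iff hL.offdiag_nonpos hL.rowsum hL.colsum]
  constructor
  · intro hedge
    have hconst : ∀ i j, φ i = φ j := fun i j => by
      simpa [Relation.reflTransGen_eq_self] using
        (hL.sconn i j).lift φ fun a b hab => hedge a b hab.2
    rcases isEmpty_or_nonempty (Fin p) with _ | ⟨⟨i₀⟩⟩
    · exact ⟨0, funext isEmptyElim⟩
    · exact ⟨φ i₀, funext fun j => hconst j i₀⟩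
  · rintro ⟨c, rfl⟩ _ _ _
    rfl
end

section
/- Suppose: (i) G is a connected undirected graph with incidence matrix B and E = [I_p;0] with p ≥ 1; (ii) for each i, ȳ_i lies in the range of the continuous strictly increasing function h_i; (iii) each ū_i lies in the range of the continuous strictly increasing function g_i, where ū = Q⁻¹(λ*·1_p − r), λ* = (1_nᵀd + 1_pᵀQ⁻¹r)/(1_pᵀQ⁻¹1_p); (iv) there exists λ̄ ∈ ℝ^m with Bλ̄ = Eū − d and λ̄_k in the range of the continuous strictly increasing function f_k for every k; (v) L ∈ ℝ^{p×p} is the Laplacian of a balanced strongly connected digraph. Then there exists (x̄, μ̄, ξ̄, θ̄, φ̄) satisfying the equilibrium equations: 0 = −B f(μ̄) + E g(θ̄) − d; 0 = Bᵀ(h(x̄) − ȳ) − (f(μ̄) − ξ̄); 0 = f(μ̄) − ξ̄; 0 = −Eᵀ(h(x̄) − ȳ) − (g(θ̄) − φ̄); 0 = (g(θ̄) − φ̄) − Q L (Q φ̄ + r). -/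
/- The equilibrium is read off the optimality data: pick `x̄, μ̄, θ̄` with `h(x̄) = ȳ`,
`f(μ̄) = λ̄`, `g(θ̄) = ū`, and take `ξ̄ = f(μ̄)`, `φ̄ = g(θ̄)`. All output errors then vanish,
the flow balance is `Bλ̄ = Eū − d`, and `Qū + r = λ*·1` is a consensus vector, which the
Laplacian annihilates because its row sums are zero. -/

open Matrix BigOperators Filter Topology MeasureTheory

theorem exists_cw_eq {k : ℕ} {f : Fin k → ℝ → ℝ} {y : Fin k → ℝ}
    (hy : ∀ i, y i ∈ Set.range (f i)) : ∃ x, cw f x = y := by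
  choose x hx using hy
  exact ⟨x, funext hx⟩

theorem diagonal_mulVec_uOpt_add {n p : ℕ} {q : Fin p → ℝ} (hq : ∀ i, q i ≠ 0)
    (r : Fin p → ℝ) (d : Fin n → ℝ) :
    (diagonal q) *ᵥ uOpt q r d + r = fun _ => lamStar q r d := by
  funext i
  simp only [Pi.add_apply, mulVec_diagonal, uOpt]
  field_simp [hq i]
  ring

theorem mulVec_const_eq_zero {ι R : Type*} [Fintype ι] [CommSemiring R] {L : Matrix ι ι R}
    (hL : L *ᵥ (fun _ => 1) = 0) (c : R) : L *ᵥ (fun _ => c) = 0 := by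
  have hc : (fun _ : ι => c) = c • fun _ => (1 : R) := by
    funext; simp
  rw [hc, mulVec_smul, hL, smul_zero]

theorem equilibrium_exists_general {n m p : ℕ}
    (G : OrientedGraph n m)
    (h : Fin n → ℝ → ℝ)
    (f : Fin m → ℝ → ℝ)
    (g : Fin p → ℝ → ℝ)
    (q r : Fin p → ℝ) (hq : ∀ i, 0 < q i) (d ybar : Fin n → ℝ)
    (hy : ∀ i, ybar i ∈ Set.range (h i))
    (hu : ∀ i, uOpt q r d i ∈ Set.range (g i))
    (hlam : ∃ lb : Fin m → ℝ,
      G.inc.mulVec lb = (selE n p).mulVec (uOpt q r d) - d ∧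
      ∀ k, lb k ∈ Set.range (f k))
    (L : Matrix (Fin p) (Fin p) ℝ) (hL : IsBalancedStronglyConnectedLaplacian L) :
    ∃ (xb : Fin n → ℝ) (mb xib : Fin m → ℝ) (thb phb : Fin p → ℝ),
      0 = -(G.inc.mulVec (cw f mb)) + (selE n p).mulVec (cw g thb) - d ∧
      0 = (G.inc)ᵀ.mulVec (cw h xb - ybar) - (cw f mb - xib) ∧
      0 = cw f mb - xib ∧
      0 = -((selE n p)ᵀ.mulVec (cw h xb - ybar)) - (cw g thb - phb) ∧
      0 = (cw g thb - phb) -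
        (Matrix.diagonal q).mulVec (L.mulVec ((Matrix.diagonal q).mulVec phb + r)) := by
  obtain ⟨lb, hflow, hlb⟩ := hlam
  obtain ⟨xb, hxb⟩ := exists_cw_eq hy
  obtain ⟨mb, hmb⟩ := exists_cw_eq hlb
  obtain ⟨thb, hthb⟩ := exists_cw_eq hu
  refine ⟨xb, mb, cw f mb, thb, cw g thb, ?_, ?_, ?_, ?_, ?_⟩
  · rw [hmb, hthb, hflow]; abel
  · simp [hxb]
  · simp
  · simp [hxb]
  · rw [hthb, diagonal_mulVec_uOpt_add (fun i => (hq i).ne'), mulVec_const_eq_zero hL.rowsum]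
    simp

/-- Existence of an equilibrium of the closed-loop system. -/
theorem equilibrium_exists {n m p : ℕ} (hp : 0 < p) (hpn : p ≤ n)
    (G : OrientedGraph n m) (hG : G.Connected)
    (h : Fin n → ℝ → ℝ) (hh : ∀ i, Continuous (h i) ∧ StrictMono (h i))
    (f : Fin m → ℝ → ℝ) (hf : ∀ k, Continuous (f k) ∧ StrictMono (f k))
    (g : Fin p → ℝ → ℝ) (hg : ∀ i, Continuous (g i) ∧ StrictMono (g i))
    (q r : Fin p → ℝ) (hq : ∀ i, 0 < q i) (d ybar : Fin n → ℝ)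
    (hy : ∀ i, ybar i ∈ Set.range (h i))
    (hu : ∀ i, uOpt q r d i ∈ Set.range (g i))
    (hlam : ∃ lb : Fin m → ℝ,
      G.inc.mulVec lb = (selE n p).mulVec (uOpt q r d) - d ∧
      ∀ k, lb k ∈ Set.range (f k))
    (L : Matrix (Fin p) (Fin p) ℝ) (hL : IsBalancedStronglyConnectedLaplacian L) :
    ∃ (xb : Fin n → ℝ) (mb xib : Fin m → ℝ) (thb phb : Fin p → ℝ),
      0 = -(G.inc.mulVec (cw f mb)) + (selE n p).mulVec (cw g thb) - d ∧
      0 = (G.inc)ᵀ.mulVec (cw h xb - ybar) - (cw f mb - xib) ∧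
      0 = cw f mb - xib ∧
      0 = -((selE n p)ᵀ.mulVec (cw h xb - ybar)) - (cw g thb - phb) ∧
      0 = (cw g thb - phb) -
        (Matrix.diagonal q).mulVec (L.mulVec ((Matrix.diagonal q).mulVec phb + r)) :=
  equilibrium_exists_general G h f g q r hq d ybar hy hu hlam L hL
end

section
/- Let (x̄, μ̄, ξ̄, θ̄) satisfy 0 = −B f(μ̄) + E g(θ̄) − d, 0 = Bᵀ(h(x̄) − ȳ) − (f(μ̄) − ξ̄) and ξ̄ = f(μ̄). Let t ↦ (x(t), μ(t), ξ(t)) be differentiable and satisfy, for a given curve t ↦ θ(t), the equations T_x ẋ = −B f(μ) + E g(θ) − d, T_μ μ̇ = Bᵀ(h(x) − ȳ) − (f(μ) − ξ), T_ξ ξ̇ = f(μ) − ξ. Then the storage function V₁(t) = Σ_i T_{x,i} ∫_{x̄_i}^{x_i(t)} (h_i(y) − h_i(x̄_i)) dy + Σ_k T_{μ,k} ∫_{μ̄_k}^{μ_k(t)} (f_k(y) − f_k(μ̄_k)) dy + ½ (ξ(t) − ξ̄)ᵀ T_ξ (ξ(t) − ξ̄) is differentiable with dV₁/dt = (h(x)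 − h(x̄))ᵀ E (g(θ) − g(θ̄)) − ‖f(μ) − ξ‖². -/
open Matrix BigOperators Filter Topology MeasureTheory

/-!
By the fundamental theorem of calculus, `dV₁/dt = Δhᵀ T_x ẋ + Δfᵀ T_μ μ̇ + (ξ − ξ̄)ᵀ T_ξ ξ̇`
with `Δh = h(x) − h(x̄)`, `Δf = f(μ) − f(μ̄)`. Subtracting the equilibrium equations gives the
incremental dynamics `T_x ẋ = −B Δf + E Δg`, `T_μ μ̇ = Bᵀ Δh − (f(μ) − ξ)`. The coupling terms
`−Δhᵀ B Δf + Δfᵀ Bᵀ Δh` cancel, and since `ξ̄ = f(μ̄)` the remaining terms combine to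
`Δhᵀ E Δg − (Δf − (ξ − ξ̄))ᵀ (f(μ) − ξ) = Δhᵀ E Δg − ‖f(μ) − ξ‖²`.
-/

section StorageDerivatives

variable {ι : Type*} [Fintype ι] (T : ι → ℝ) {u : ℝ → ι → ℝ} {u' : ι → ℝ} {t : ℝ}

theorem hasDerivAt_sum_mul_integral_sub {φ : ι → ℝ → ℝ} (hφ : ∀ i, Continuous (φ i))
    (a : ι → ℝ) (hu : ∀ i, HasDerivAt (fun s => u s i) (u' i) t) :
    HasDerivAt (fun s => ∑ i, T i * ∫ y in (a i)..(u s i), (φ i y - φ i (a i)))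
      ((fun i => φ i (u t i) - φ i (a i)) ⬝ᵥ fun i => T i * u' i) t := by
  have hterm (i : ι) : HasDerivAt (fun s => ∫ y in (a i)..(u s i), (φ i y - φ i (a i)))
      ((φ i (u t i) - φ i (a i)) * u' i) t :=
    HasDerivAt.comp (h₂ := fun v => ∫ y in (a i)..v, (φ i y - φ i (a i))) t
      (((hφ i).sub continuous_const).integral_hasStrictDerivAt (a i) (u t i)).hasDerivAt (hu i)
  refine (HasDerivAt.fun_sum fun i _ => (hterm i).const_mul (T i)).congr_deriv ?_
  exact Finset.sum_congr rfl fun i _ => by ring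

theorem hasDerivAt_half_sum_mul_sub_sq (c : ι → ℝ)
    (hu : ∀ i, HasDerivAt (fun s => u s i) (u' i) t) :
    HasDerivAt (fun s => (1 / 2) * ∑ i, T i * (u s i - c i) ^ 2)
      ((u t - c) ⬝ᵥ fun i => T i * u' i) t := by
  refine ((HasDerivAt.fun_sum fun i _ =>
    (((hu i).sub_const (c i)).pow 2).const_mul (T i)).const_mul (1 / 2 : ℝ)).congr_deriv ?_
  simp only [dotProduct, Finset.mul_sum, Pi.sub_apply]
  exact Finset.sum_congr rfl fun i _ => by push_cast; ring

end StorageDerivatives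

theorem dotProduct_skew_interconnection {ι κ : Type*} [Fintype ι] [Fintype κ]
    (B : Matrix ι κ ℝ) (a v : ι → ℝ) (w z e : κ → ℝ) :
    a ⬝ᵥ (-(B *ᵥ w) + v) + w ⬝ᵥ (Bᵀ *ᵥ a - z) + e ⬝ᵥ z = a ⬝ᵥ v - (w - e) ⬝ᵥ z := by
  have hskew : w ⬝ᵥ (Bᵀ *ᵥ a) = a ⬝ᵥ (B *ᵥ w) := by
    rw [mulVec_transpose, dotProduct_comm, ← dotProduct_mulVec]
  simp only [dotProduct_add, dotProduct_neg, dotProduct_sub, sub_dotProduct, hskew]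
  ring

theorem storage_V1_derivative_general {n m p : ℕ} (G : OrientedGraph n m)
    (h : Fin n → ℝ → ℝ) (hh : ∀ i, ContDiff ℝ 1 (h i) ∧ StrictMono (h i))
    (f : Fin m → ℝ → ℝ) (hf : ∀ k, ContDiff ℝ 1 (f k) ∧ StrictMono (f k))
    (g : Fin p → ℝ → ℝ)
    (Tx : Fin n → ℝ)
    (Tm Txi : Fin m → ℝ)
    (d ybar : Fin n → ℝ)
    -- the equilibrium
    (xb : Fin n → ℝ) (mb xib : Fin m → ℝ) (thb : Fin p → ℝ)
    (heq1 : 0 = -(G.inc.mulVec (cw f mb)) + (selE n p).mulVec (cw g thb) - d)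
    (heq2 : 0 = (G.inc)ᵀ.mulVec (cw h xb - ybar) - (cw f mb - xib))
    (heq3 : xib = cw f mb)
    -- the solution, for a given curve θ
    (x x' : ℝ → Fin n → ℝ) (μ ξ μ' ξ' : ℝ → Fin m → ℝ) (θ : ℝ → Fin p → ℝ)
    (hx : ∀ t i, HasDerivAt (fun s => x s i) (x' t i) t)
    (hμ : ∀ t k, HasDerivAt (fun s => μ s k) (μ' t k) t)
    (hξ : ∀ t k, HasDerivAt (fun s => ξ s k) (ξ' t k) t)
    (hxeq : ∀ t, (fun i => Tx i * x' t i) =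
      -(G.inc.mulVec (cw f (μ t))) + (selE n p).mulVec (cw g (θ t)) - d)
    (hμeq : ∀ t, (fun k => Tm k * μ' t k) =
      (G.inc)ᵀ.mulVec (cw h (x t) - ybar) - (cw f (μ t) - ξ t))
    (hξeq : ∀ t, (fun k => Txi k * ξ' t k) = cw f (μ t) - ξ t) :
    ∀ t : ℝ, HasDerivAt (fun s =>
        (∑ i, Tx i * ∫ y in (xb i)..(x s i), (h i y - h i (xb i))) +
        (∑ k, Tm k * ∫ y in (mb k)..(μ s k), (f k y - f k (mb k))) +
        (1 / 2) * ∑ k, Txi k * (ξ s k - xib k) ^ 2)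
      ((cw h (x t) - cw h xb) ⬝ᵥ (selE n p).mulVec (cw g (θ t) - cw g thb) -
        ∑ k, (f k (μ t k) - ξ t k) ^ 2) t := by
  intro t
  have hd : d = -(G.inc *ᵥ cw f mb) + selE n p *ᵥ cw g thb := (sub_eq_zero.mp heq1.symm).symm
  have hBT : (G.inc)ᵀ *ᵥ (cw h xb - ybar) = 0 := by
    rwa [heq3, sub_self, sub_zero, eq_comm] at heq2
  have hx_incr : (fun i => Tx i * x' t i) =
      -(G.inc *ᵥ (cw f (μ t) - cw f mb)) + selE n p *ᵥ (cw g (θ t) - cw g thb) := by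
    rw [hxeq t, hd, mulVec_sub, mulVec_sub]
    abel
  have hμ_incr : (fun k => Tm k * μ' t k) =
      (G.inc)ᵀ *ᵥ (cw h (x t) - cw h xb) - (cw f (μ t) - ξ t) := by
    rw [hμeq t, ← sub_add_sub_cancel (cw h (x t)) (cw h xb) ybar, mulVec_add, hBT, add_zero]
  refine (((hasDerivAt_sum_mul_integral_sub Tx (fun i => (hh i).1.continuous) xb (hx t)).fun_add
    (hasDerivAt_sum_mul_integral_sub Tm (fun k => (hf k).1.continuous) mb (hμ t))).fun_add
    (hasDerivAt_half_sum_mul_sub_sq Txi xib (hξ t))).congr_deriv ?_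
  change (cw h (x t) - cw h xb) ⬝ᵥ (fun i => Tx i * x' t i) +
    (cw f (μ t) - cw f mb) ⬝ᵥ (fun k => Tm k * μ' t k) + (ξ t - xib) ⬝ᵥ (fun k => Txi k * ξ' t k) = _
  rw [hx_incr, hμ_incr, hξeq t, dotProduct_skew_interconnection, heq3, sub_sub_sub_cancel_right]
  simp only [dotProduct, cw, Pi.sub_apply, sq]

/-- Incremental passivity of the network with the flow controller:
the storage function `V₁` satisfies
`dV₁/dt = (h(x)−h(x̄))ᵀ E (g(θ)−g(θ̄)) − ‖f(μ)−ξ‖²` along solutions. -/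
theorem storage_V1_derivative {n m p : ℕ} (hpn : p ≤ n) (G : OrientedGraph n m)
    (h : Fin n → ℝ → ℝ) (hh : ∀ i, ContDiff ℝ 1 (h i) ∧ StrictMono (h i))
    (f : Fin m → ℝ → ℝ) (hf : ∀ k, ContDiff ℝ 1 (f k) ∧ StrictMono (f k))
    (g : Fin p → ℝ → ℝ) (hg : ∀ i, ContDiff ℝ 1 (g i) ∧ StrictMono (g i))
    (Tx : Fin n → ℝ) (hTx : ∀ i, 0 < Tx i)
    (Tm Txi : Fin m → ℝ) (hTm : ∀ k, 0 < Tm k) (hTxi : ∀ k, 0 < Txi k)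
    (d ybar : Fin n → ℝ)
    -- the equilibrium
    (xb : Fin n → ℝ) (mb xib : Fin m → ℝ) (thb : Fin p → ℝ)
    (heq1 : 0 = -(G.inc.mulVec (cw f mb)) + (selE n p).mulVec (cw g thb) - d)
    (heq2 : 0 = (G.inc)ᵀ.mulVec (cw h xb - ybar) - (cw f mb - xib))
    (heq3 : xib = cw f mb)
    -- the solution, for a given curve θ
    (x x' : ℝ → Fin n → ℝ) (μ ξ μ' ξ' : ℝ → Fin m → ℝ) (θ : ℝ → Fin p → ℝ)
    (hx : ∀ t i, HasDerivAt (fun s => x s i) (x' t i) t)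
    (hμ : ∀ t k, HasDerivAt (fun s => μ s k) (μ' t k) t)
    (hξ : ∀ t k, HasDerivAt (fun s => ξ s k) (ξ' t k) t)
    (hxeq : ∀ t, (fun i => Tx i * x' t i) =
      -(G.inc.mulVec (cw f (μ t))) + (selE n p).mulVec (cw g (θ t)) - d)
    (hμeq : ∀ t, (fun k => Tm k * μ' t k) =
      (G.inc)ᵀ.mulVec (cw h (x t) - ybar) - (cw f (μ t) - ξ t))
    (hξeq : ∀ t, (fun k => Txi k * ξ' t k) = cw f (μ t) - ξ t) :
    ∀ t : ℝ, HasDerivAt (fun s =>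
        (∑ i, Tx i * ∫ y in (xb i)..(x s i), (h i y - h i (xb i))) +
        (∑ k, Tm k * ∫ y in (mb k)..(μ s k), (f k y - f k (mb k))) +
        (1 / 2) * ∑ k, Txi k * (ξ s k - xib k) ^ 2)
      ((cw h (x t) - cw h xb) ⬝ᵥ (selE n p).mulVec (cw g (θ t) - cw g thb) -
        ∑ k, (f k (μ t k) - ξ t k) ^ 2) t :=
  storage_V1_derivative_general G h hh f hf g Tx Tm Txi d ybar xb mb xib thb heq1 heq2 heq3 x x' μ ξ
    μ' ξ' θ hx hμ hξ hxeq hμeq hξeq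
end

section
/- Let (x̄, θ̄, φ̄) satisfy h(x̄) = ȳ, g(θ̄) = φ̄, and 0 = (g(θ̄) − φ̄) − Q L (Q φ̄ + r). Let t ↦ (θ(t), φ(t)) be differentiable and satisfy, for a given curve t ↦ x(t), the equations T_θ θ̇ = −Eᵀ(h(x) − ȳ) − (g(θ) − φ) and T_φ φ̇ = g(θ) − φ − Q L (Q φ + r). Then the storage function V₂(t) = Σ_i T_{θ,i} ∫_{θ̄_i}^{θ_i(t)} (g_i(y) − g_i(θ̄_i)) dy + ½ (φ(t) − φ̄)ᵀ T_φ (φ(t) − φ̄) is differentiable with dV₂/dt = −‖g(θ) − φ‖² − (φ − φ̄)ᵀ Q L Q (φ − φ̄) − (g(θ) − g(θ̄))ᵀ Eᵀ (h(x) − h(x̄)). -/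
/-!
Differentiating the storage function gives
`(g(θ) − g(θ̄)) ⬝ T_θ θ̇ + (φ − φ̄) ⬝ T_φ φ̇`. The equilibrium conditions turn the affine
consensus term `Q L (Q φ + r)` into `Q L Q (φ − φ̄)` and `g(θ̄)` into `φ̄`, so that
`(g(θ) − g(θ̄)) − (φ − φ̄) = g(θ) − φ`; substituting the dynamics, the two cross terms
`∓ (g(θ) − g(θ̄)) ⬝ (g(θ) − φ)` and `± (φ − φ̄) ⬝ (g(θ) − φ)` combine into `−‖g(θ) − φ‖²`.
-/

open Matrix BigOperators Filter Topology MeasureTheory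

theorem hasDerivAt_integral_sub_comp {f : ℝ → ℝ} (hf : Continuous f) (a : ℝ) {θ : ℝ → ℝ}
    {θ' t : ℝ} (hθ : HasDerivAt θ θ' t) :
    HasDerivAt (fun s => ∫ y in a..θ s, (f y - f a)) ((f (θ t) - f a) * θ') t :=
  ((hf.sub continuous_const).integral_hasStrictDerivAt a (θ t)).hasDerivAt.comp t hθ

theorem hasDerivAt_storage {ι : Type*} [Fintype ι] (g : ι → ℝ → ℝ) (hg : ∀ i, Continuous (g i))
    (Tth Tph thb phb : ι → ℝ) {θ φ : ℝ → ι → ℝ} {θ' φ' : ι → ℝ} {t : ℝ}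
    (hθ : ∀ i, HasDerivAt (fun s => θ s i) (θ' i) t)
    (hφ : ∀ i, HasDerivAt (fun s => φ s i) (φ' i) t) :
    HasDerivAt (fun s =>
        (∑ i, Tth i * ∫ y in (thb i)..(θ s i), (g i y - g i (thb i))) +
        (1 / 2) * ∑ i, Tph i * (φ s i - phb i) ^ 2)
      ((fun i => g i (θ t i) - g i (thb i)) ⬝ᵥ (fun i => Tth i * θ' i) +
        (φ t - phb) ⬝ᵥ (fun i => Tph i * φ' i)) t := by
  have hintegral : HasDerivAt (fun s => ∑ i, Tth i * ∫ y in (thb i)..(θ s i), (g i y - g i (thb i)))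
      (∑ i, Tth i * ((g i (θ t i) - g i (thb i)) * θ' i)) t :=
    HasDerivAt.fun_sum fun i _ => (hasDerivAt_integral_sub_comp (hg i) (thb i) (hθ i)).const_mul _
  have hquadratic : HasDerivAt (fun s => (1 / 2) * ∑ i, Tph i * (φ s i - phb i) ^ 2)
      ((1 / 2) * ∑ i, Tph i * ((2 : ℕ) * (φ t i - phb i) ^ 1 * φ' i)) t :=
    (HasDerivAt.fun_sum fun i _ => (((hφ i).sub_const (phb i)).pow 2).const_mul (Tph i)).const_mul _
  refine (hintegral.add hquadratic).congr_deriv ?_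
  simp only [dotProduct, Pi.sub_apply, Finset.mul_sum]
  congr 1 <;> refine Finset.sum_congr rfl fun i _ => ?_ <;> push_cast <;> ring

theorem mulVec_affine_eq_mul_mulVec_sub {ι R : Type*} [Fintype ι] [CommRing R]
    (A B C : Matrix ι ι R) {u v r : ι → R} (hv : A *ᵥ (B *ᵥ (C *ᵥ v + r)) = 0) :
    A *ᵥ (B *ᵥ (C *ᵥ u + r)) = (A * B * C) *ᵥ (u - v) := by
  rw [← sub_zero (A *ᵥ _), ← hv, ← mulVec_sub, ← mulVec_sub, add_sub_add_right_eq_sub,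
    ← mulVec_sub, mulVec_mulVec, mulVec_mulVec]

theorem dotProduct_dissipation {ι R : Type*} [Fintype ι] [CommRing R] (M : Matrix ι ι R)
    {a b e w : ι → R} (he : a - b = e) :
    a ⬝ᵥ (-w - e) + b ⬝ᵥ (e - M *ᵥ b) = -(e ⬝ᵥ e) - b ⬝ᵥ M *ᵥ b - a ⬝ᵥ w := by
  subst he
  simp only [dotProduct_sub, sub_dotProduct, dotProduct_neg, dotProduct_comm b a]
  ring

theorem storage_V2_derivative_general {n p : ℕ}
    (h : Fin n → ℝ → ℝ)
    (g : Fin p → ℝ → ℝ) (hg : ∀ i, ContDiff ℝ 1 (g i) ∧ StrictMono (g i))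
    (Tth Tph : Fin p → ℝ)
    (q r : Fin p → ℝ) (ybar : Fin n → ℝ)
    (L : Matrix (Fin p) (Fin p) ℝ)
    -- the equilibrium
    (xb : Fin n → ℝ) (thb phb : Fin p → ℝ)
    (heqx : cw h xb = ybar)
    (heqg : cw g thb = phb)
    (heq5 : 0 = (cw g thb - phb) -
      (Matrix.diagonal q).mulVec (L.mulVec ((Matrix.diagonal q).mulVec phb + r)))
    -- the solution, for a given curve x
    (x : ℝ → Fin n → ℝ) (θ φ θ' φ' : ℝ → Fin p → ℝ)
    (hθ : ∀ t i, HasDerivAt (fun s => θ s i) (θ' t i) t)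
    (hφ : ∀ t i, HasDerivAt (fun s => φ s i) (φ' t i) t)
    (hθeq : ∀ t, (fun i => Tth i * θ' t i) =
      -((selE n p)ᵀ.mulVec (cw h (x t) - ybar)) - (cw g (θ t) - φ t))
    (hφeq : ∀ t, (fun i => Tph i * φ' t i) =
      cw g (θ t) - φ t -
        (Matrix.diagonal q).mulVec (L.mulVec ((Matrix.diagonal q).mulVec (φ t) + r))) :
    ∀ t : ℝ, HasDerivAt (fun s =>
        (∑ i, Tth i * ∫ y in (thb i)..(θ s i), (g i y - g i (thb i))) +
        (1 / 2) * ∑ i, Tph i * (φ s i - phb i) ^ 2)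
      (-(∑ i, (g i (θ t i) - φ t i) ^ 2) -
        (φ t - phb) ⬝ᵥ (Matrix.diagonal q * L * Matrix.diagonal q).mulVec (φ t - phb) -
        (cw g (θ t) - cw g thb) ⬝ᵥ (selE n p)ᵀ.mulVec (cw h (x t) - cw h xb)) t := by
  intro t
  have hcons : diagonal q *ᵥ (L *ᵥ (diagonal q *ᵥ phb + r)) = 0 := by
    simpa [heqg] using heq5.symm
  have hTθ := hθeq t
  have hTφ := hφeq t
  rw [← heqx] at hTθ
  rw [mulVec_affine_eq_mul_mulVec_sub _ _ _ hcons] at hTφ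
  convert hasDerivAt_storage g (fun i => (hg i).1.continuous) Tth Tph thb phb
    (fun i => hθ t i) (fun i => hφ t i) using 1
  change _ = (cw g (θ t) - cw g thb) ⬝ᵥ _ + _
  rw [hTθ, hTφ, dotProduct_dissipation _ (by rw [heqg]; abel)]
  simp only [dotProduct, Pi.sub_apply, cw, sq]

/-- Incremental passivity of the input controller: the storage
function `V₂` satisfies
`dV₂/dt = −‖g(θ)−φ‖² − (φ−φ̄)ᵀQLQ(φ−φ̄) − (g(θ)−g(θ̄))ᵀEᵀ(h(x)−h(x̄))` along solutions. -/
theorem storage_V2_derivative {n m p : ℕ} (hpn : p ≤ n) (G : OrientedGraph n m)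
    (h : Fin n → ℝ → ℝ) (hh : ∀ i, ContDiff ℝ 1 (h i) ∧ StrictMono (h i))
    (g : Fin p → ℝ → ℝ) (hg : ∀ i, ContDiff ℝ 1 (g i) ∧ StrictMono (g i))
    (Tth Tph : Fin p → ℝ) (hTth : ∀ i, 0 < Tth i) (hTph : ∀ i, 0 < Tph i)
    (q r : Fin p → ℝ) (hq : ∀ i, 0 < q i) (ybar : Fin n → ℝ)
    (L : Matrix (Fin p) (Fin p) ℝ) (hL : IsBalancedStronglyConnectedLaplacian L)
    -- the equilibrium
    (xb : Fin n → ℝ) (thb phb : Fin p → ℝ)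
    (heqx : cw h xb = ybar)
    (heqg : cw g thb = phb)
    (heq5 : 0 = (cw g thb - phb) -
      (Matrix.diagonal q).mulVec (L.mulVec ((Matrix.diagonal q).mulVec phb + r)))
    -- the solution, for a given curve x
    (x : ℝ → Fin n → ℝ) (θ φ θ' φ' : ℝ → Fin p → ℝ)
    (hθ : ∀ t i, HasDerivAt (fun s => θ s i) (θ' t i) t)
    (hφ : ∀ t i, HasDerivAt (fun s => φ s i) (φ' t i) t)
    (hθeq : ∀ t, (fun i => Tth i * θ' t i) =
      -((selE n p)ᵀ.mulVec (cw h (x t) - ybar)) - (cw g (θ t) - φ t))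
    (hφeq : ∀ t, (fun i => Tph i * φ' t i) =
      cw g (θ t) - φ t -
        (Matrix.diagonal q).mulVec (L.mulVec ((Matrix.diagonal q).mulVec (φ t) + r))) :
    ∀ t : ℝ, HasDerivAt (fun s =>
        (∑ i, Tth i * ∫ y in (thb i)..(θ s i), (g i y - g i (thb i))) +
        (1 / 2) * ∑ i, Tph i * (φ s i - phb i) ^ 2)
      (-(∑ i, (g i (θ t i) - φ t i) ^ 2) -
        (φ t - phb) ⬝ᵥ (Matrix.diagonal q * L * Matrix.diagonal q).mulVec (φ t - phb) -
        (cw g (θ t) - cw g thb) ⬝ᵥ (selE n p)ᵀ.mulVec (cw h (x t) - cw h xb)) t :=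
  storage_V2_derivative_general h g hg Tth Tph q r ybar L xb thb phb heqx heqg heq5 x θ φ θ' φ' hθ
    hφ hθeq hφeq
end

section
/- Let G be a connected undirected graph on node set V = {1,…,n} with oriented incidence matrix B ∈ ℝ^{n×m}, let D ∈ ℝ^{m×m} be diagonal with strictly positive diagonal entries, and set L = B D Bᵀ. Let Z ⊆ V be a zero forcing set for G. If v ∈ ℝ^n satisfies v_i = 0 for all i ∈ Z, and (L v)_i = 0 for every node i with v_i = 0, then v = 0. -/
open Matrix BigOperators Filter Topology MeasureTheory

/-- One application of the zero-forcing color-change rule: a white node `j` becomes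
black if some black node `i` has `j` as its unique white neighbor. -/
def zfStep {n m : ℕ} (G : OrientedGraph n m) (S : Set (Fin n)) : Set (Fin n) :=
  S ∪ {j | ∃ i ∈ S, G.Adj i j ∧ ∀ j', G.Adj i j' → j' ∉ S → j' = j}

/-- `Z` is a zero forcing set for `G` if iterating the color-change rule starting from
`Z` eventually colors all nodes black. -/
def IsZeroForcingSet {n m : ℕ} (G : OrientedGraph n m) (Z : Set (Fin n)) : Prop :=
  ∃ k : ℕ, (zfStep G)^[k] Z = Set.univ

/-!
If `v` vanishes on `S` and a node `i ∈ S` forces `j`, then every neighbour of `i` other than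
`j` lies in `S`, so `(Lv)_i = -w_{ij} v_j`, where `w_{ij} > 0` is the total weight of the edges
joining `i` and `j`. Hence `(Lv)_i = 0` gives `v_j = 0`: the zero set of `v` is closed under the
colour-change rule, and so contains everything a zero forcing set forces.
-/

namespace OrientedGraph

variable {n m : ℕ} (G : OrientedGraph n m)

theorem transpose_inc_mulVec (v : Fin n → ℝ) :
    G.incᵀ *ᵥ v = fun k => v (G.pos k) - v (G.neg k) := by
  funext k
  have hne := G.ne_ends k
  simp only [mulVec, dotProduct, transpose_apply, inc, of_apply, ite_mul, one_mul, neg_mul,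
    zero_mul]
  rw [Finset.sum_ite, Finset.sum_ite]
  simp [Finset.filter_eq', Finset.filter_ne', hne.symm, sub_eq_add_neg]

theorem laplacian_mulVec_apply (dw : Fin m → ℝ) (v : Fin n → ℝ) (i : Fin n) :
    ((G.inc * diagonal dw * G.incᵀ) *ᵥ v) i
      = ∑ k, G.inc i k * (dw k * (v (G.pos k) - v (G.neg k))) := by
  simp only [← mulVec_mulVec, transpose_inc_mulVec]
  simp [mulVec, dotProduct, diagonal_apply]

variable {G}

theorem laplacian_mulVec_apply_of_forces {dw : Fin m → ℝ} {v : Fin n → ℝ} {i j : Fin n}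
    (hi : v i = 0) (hnbr : ∀ j', G.Adj i j' → j' ≠ j → v j' = 0) :
    ((G.inc * diagonal dw * G.incᵀ) *ᵥ v) i
      = -(∑ k, if (G.pos k = i ∧ G.neg k = j) ∨ (G.pos k = j ∧ G.neg k = i) then dw k else 0)
          * v j := by
  rw [laplacian_mulVec_apply, neg_mul, Finset.sum_mul, ← Finset.sum_neg_distrib]
  refine Finset.sum_congr rfl fun k _ => ?_
  have hne := G.ne_ends k
  have hpos : G.pos k = i → G.neg k ≠ j → v (G.neg k) = 0 :=
    fun h => hnbr _ ⟨k, .inl ⟨h, rfl⟩⟩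
  have hneg : G.neg k = i → G.pos k ≠ j → v (G.pos k) = 0 :=
    fun h => hnbr _ ⟨k, .inr ⟨rfl, h⟩⟩
  simp only [inc, of_apply]
  split_ifs <;> grind

theorem eq_zero_of_forces {dw : Fin m → ℝ} (hdw : ∀ k, 0 < dw k) {v : Fin n → ℝ} {i j : Fin n}
    (hij : G.Adj i j) (hi : v i = 0) (hnbr : ∀ j', G.Adj i j' → j' ≠ j → v j' = 0)
    (hL : ((G.inc * diagonal dw * G.incᵀ) *ᵥ v) i = 0) : v j = 0 := by
  rw [laplacian_mulVec_apply_of_forces hi hnbr, neg_mul, neg_eq_zero] at hL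
  obtain ⟨k, hk⟩ := hij
  have hw : 0 < ∑ k, if (G.pos k = i ∧ G.neg k = j) ∨ (G.pos k = j ∧ G.neg k = i)
      then dw k else 0 :=
    Finset.sum_pos' (fun k _ => by split_ifs <;> simp [(hdw k).le])
      ⟨k, Finset.mem_univ k, by simpa [hk] using hdw k⟩
  exact (mul_eq_zero.mp hL).resolve_left hw.ne'

end OrientedGraph

theorem zfStep_subset_zeros {n m : ℕ} {G : OrientedGraph n m} {dw : Fin m → ℝ}
    (hdw : ∀ k, 0 < dw k) {v : Fin n → ℝ}
    (hvL : ∀ i, v i = 0 → ((G.inc * diagonal dw * G.incᵀ) *ᵥ v) i = 0)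
    {S : Set (Fin n)} (hS : S ⊆ {i | v i = 0}) : zfStep G S ⊆ {i | v i = 0} := by
  rintro j (hj | ⟨i, hi, hij, hforce⟩)
  · exact hS hj
  · refine G.eq_zero_of_forces hdw hij (hS hi) (fun j' hij' hj' => ?_) (hvL i (hS hi))
    by_contra hv
    exact hj' (hforce j' hij' fun h => hv (hS h))

theorem zero_forcing_laplacian_general {n m : ℕ} (G : OrientedGraph n m)
    (dw : Fin m → ℝ) (hdw : ∀ k, 0 < dw k)
    (Z : Set (Fin n)) (hZ : IsZeroForcingSet G Z)
    (v : Fin n → ℝ) (hvZ : ∀ i ∈ Z, v i = 0)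
    (hvL : ∀ i, v i = 0 → (G.inc * Matrix.diagonal dw * (G.inc)ᵀ).mulVec v i = 0) :
    v = 0 := by
  obtain ⟨K, hK⟩ := hZ
  have hstep : Set.MapsTo (zfStep G) {S | S ⊆ {i | v i = 0}} {S | S ⊆ {i | v i = 0}} :=
    fun _ => zfStep_subset_zeros hdw hvL
  have hzero : (zfStep G)^[K] Z ⊆ {i | v i = 0} := hstep.iterate K hvZ
  rw [hK] at hzero
  exact funext fun i => hzero (Set.mem_univ i)

/-- Let `L = BDBᵀ` be a weighted Laplacian of a connected graph and
`Z` a zero forcing set. If `v` vanishes on `Z` and `(Lv)_i = 0` whenever `v_i = 0`,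
then `v = 0`. -/
theorem zero_forcing_laplacian {n m : ℕ} (G : OrientedGraph n m) (hG : G.Connected)
    (dw : Fin m → ℝ) (hdw : ∀ k, 0 < dw k)
    (Z : Set (Fin n)) (hZ : IsZeroForcingSet G Z)
    (v : Fin n → ℝ) (hvZ : ∀ i ∈ Z, v i = 0)
    (hvL : ∀ i, v i = 0 → (G.inc * Matrix.diagonal dw * (G.inc)ᵀ).mulVec v i = 0) :
    v = 0 :=
  zero_forcing_laplacian_general G dw hdw Z hZ v hvZ hvL
end
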